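/- arXiv:1311.2748 — 6 statements merged into one kernel-verified Lean document; each statement's English description precedes it below -/
import Mathlib

section
/- Let H be a graph of order n with a complete dominating induced matching M of size m (so 0 < 2m < n). Then the spectral radius of the adjacency matrix of H equals (1 + √(1 + 8m(n−2m)))/2. -/
/-!
The matched vertices `V(M)` split into the `m` edges of `M`; a matched vertex is adjacent to its
partner and to all `k = n - 2m` unmatched vertices, and an unmatched vertex to all `2m` matched
ones. Hence the vector equal to `r` on `V(M)` and to `2m` elsewhere is a positive eigenvector with
eigenvalue `r` as soon as `r ^ 2 = r + 2mk`. A positive eigenvector of a nonnegative matrix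
belongs to its spectral radius: comparing an eigenvector `x` with it at a coordinate where
`|x i| / y i` is maximal bounds every eigenvalue in absolute value.
-/


open Matrix Finset
open scoped Classical

def edgesShare {V : Type*} (e f : Sym2 V) : Prop := ∃ v, v ∈ e ∧ v ∈ f

def matchedVert {V : Type*} (M : Finset (Sym2 V)) (v : V) : Prop := ∃ e ∈ M, v ∈ e

/-- `M` is a set of edges of `G`, pairwise not sharing end-vertices. -/
def IsMatchingSet {V : Type*} (G : SimpleGraph V) (M : Finset (Sym2 V)) : Prop :=
  (∀ e ∈ M, e ∈ G.edgeSet) ∧ ∀ e ∈ M, ∀ f ∈ M, e ≠ f → ¬ edgesShare e f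

/-- Dominating induced matching: every edge of `G` is in `M` or shares an
end-vertex with exactly one edge of `M`. -/
def IsDIM {V : Type*} (G : SimpleGraph V) (M : Finset (Sym2 V)) : Prop :=
  IsMatchingSet G M ∧ ∀ e ∈ G.edgeSet, e ∉ M → ∃! f, f ∈ M ∧ edgesShare e f

/-- Induced matching: the subgraph induced by the matched vertices consists
exactly of the edges of `M`. -/
def IsInducedMatching {V : Type*} (G : SimpleGraph V) (M : Finset (Sym2 V)) : Prop :=
  IsMatchingSet G M ∧ ∀ e ∈ G.edgeSet, (∀ v ∈ e, matchedVert M v) → e ∈ M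

/-- Complete dominating induced matching: a DIM such that the set of unmatched
vertices is nonempty and every matched vertex is adjacent to every unmatched vertex,
i.e. `E(G) = M ∪ {xy : x ∈ V(M), y ∉ V(M)}`. -/
def IsCompleteDIM {V : Type*} (G : SimpleGraph V) (M : Finset (Sym2 V)) : Prop :=
  IsDIM G M ∧ (∃ v, ¬ matchedVert M v) ∧
    ∀ x y : V, matchedVert M x → ¬ matchedVert M y → G.Adj x y

open SimpleGraph

namespace Matrix

variable {ι K : Type*} [Fintype ι] [Field K]

theorem mem_spectrum_iff_exists_mulVec_eq_smul [DecidableEq ι] {A : Matrix ι ι K} {μ : K} :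
    μ ∈ spectrum K A ↔ ∃ x : ι → K, x ≠ 0 ∧ A *ᵥ x = μ • x := by
  rw [← spectrum_toLin', ← Module.End.hasEigenvalue_iff_mem_spectrum,
    Module.End.hasEigenvalue_iff, Submodule.ne_bot_iff]
  simp only [Module.End.mem_eigenspace_iff, toLin'_apply]
  exact ⟨fun ⟨x, hx, h0⟩ => ⟨x, h0, hx⟩, fun ⟨x, h0, hx⟩ => ⟨x, hx, h0⟩⟩

variable {A : Matrix ι ι ℝ} {y : ι → ℝ} {r : ℝ}

theorem abs_le_of_mulVec_eq_smul_of_pos (hA : ∀ i j, 0 ≤ A i j) (hy : ∀ i, 0 < y i)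
    (hAy : A *ᵥ y = r • y) {x : ι → ℝ} (hx : x ≠ 0) {μ : ℝ} (hAx : A *ᵥ x = μ • x) :
    |μ| ≤ r := by
  obtain ⟨j, hj⟩ := Function.ne_iff.mp hx
  obtain ⟨i, -, hi⟩ := exists_max_image univ (fun k => |x k| / y k) ⟨j, mem_univ j⟩
  set c := |x i| / y i
  have hbound : ∀ k, |x k| ≤ c * y k := fun k =>
    (div_le_iff₀ (hy k)).mp (hi k (mem_univ k))
  have hxi : 0 < |x i| := by
    have hc : 0 < c := (div_pos (abs_pos.mpr hj) (hy j)).trans_le (hi j (mem_univ j))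
    simpa [c, div_pos_iff_of_pos_right (hy i)] using hc
  refine le_of_mul_le_mul_right ?_ hxi
  calc |μ| * |x i| = |∑ k, A i k * x k| := by
        rw [← abs_mul, ← smul_eq_mul, ← Pi.smul_apply, ← hAx]; rfl
    _ ≤ ∑ k, |A i k * x k| := abs_sum_le_sum_abs _ _
    _ = ∑ k, A i k * |x k| := by simp only [abs_mul, abs_of_nonneg (hA i _)]
    _ ≤ ∑ k, A i k * (c * y k) := by gcongr with k; exacts [hA i k, hbound k]
    _ = c * (A *ᵥ y) i := by
        simp only [mulVec, dotProduct, mul_sum]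
        exact sum_congr rfl fun k _ => by ring
    _ = r * |x i| := by
        rw [hAy, Pi.smul_apply, smul_eq_mul, mul_left_comm, div_mul_cancel₀ _ (hy i).ne']

theorem isGreatest_spectrum_of_pos_eigenvector [DecidableEq ι] [Nonempty ι]
    (hA : ∀ i j, 0 ≤ A i j) (hy : ∀ i, 0 < y i) (hAy : A *ᵥ y = r • y) :
    IsGreatest (spectrum ℝ A) r := by
  refine ⟨mem_spectrum_iff_exists_mulVec_eq_smul.2 ⟨y, ?_, hAy⟩, fun μ hμ => ?_⟩
  · exact Function.ne_iff.2 ⟨Classical.arbitrary ι, (hy _).ne'⟩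
  · obtain ⟨x, hx, hAx⟩ := mem_spectrum_iff_exists_mulVec_eq_smul.1 hμ
    exact (le_abs_self μ).trans (abs_le_of_mulVec_eq_smul_of_pos hA hy hAy hx hAx)

end Matrix

section DominatingInducedMatching

variable {V : Type*} {G : SimpleGraph V} {M : Finset (Sym2 V)}

theorem IsMatchingSet.eq_of_mem_of_mem (hM : IsMatchingSet G M) {e f : Sym2 V} (he : e ∈ M)
    (hf : f ∈ M) {v : V} (hve : v ∈ e) (hvf : v ∈ f) : e = f :=
  by_contra fun hne => hM.2 e he f hf hne ⟨v, hve, hvf⟩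

theorem matchedVert.exists_mk_mem {v : V} (hv : matchedVert M v) : ∃ w, s(v, w) ∈ M := by
  obtain ⟨e, he, hve⟩ := hv
  obtain ⟨w, rfl⟩ := Sym2.mem_iff_exists.1 hve
  exact ⟨w, he⟩

theorem IsDIM.matchedVert_or_matchedVert_of_adj (hM : IsDIM G M) {u v : V} (huv : G.Adj u v) :
    matchedVert M u ∨ matchedVert M v := by
  by_cases huvM : s(u, v) ∈ M
  · exact Or.inl ⟨_, huvM, Sym2.mem_mk_left u v⟩
  obtain ⟨f, ⟨hf, w, hw, hwf⟩, -⟩ := hM.2 _ (G.mem_edgeSet.2 huv) huvM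
  rcases Sym2.mem_iff.1 hw with rfl | rfl
  exacts [Or.inl ⟨f, hf, hwf⟩, Or.inr ⟨f, hf, hwf⟩]

/-- A matched neighbour `u` of `v` must be its partner: otherwise the edge `vu` would share an
end-vertex with two edges of `M`. -/
theorem IsDIM.eq_of_adj_of_matchedVert (hM : IsDIM G M) {v w u : V} (hvw : s(v, w) ∈ M)
    (hvu : G.Adj v u) (hu : matchedVert M u) : u = w := by
  obtain ⟨e, he, hue⟩ := hu
  have hu_mem : u ∈ s(v, w) := by
    by_cases hvuM : s(v, u) ∈ M
    · exact hM.1.eq_of_mem_of_mem hvuM hvw (Sym2.mem_mk_left v u) (Sym2.mem_mk_left v w) ▸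
        Sym2.mem_mk_right v u
    · obtain ⟨f, -, hf⟩ := hM.2 _ (G.mem_edgeSet.2 hvu) hvuM
      have : e = s(v, w) := (hf e ⟨he, u, Sym2.mem_mk_right v u, hue⟩).trans
        (hf _ ⟨hvw, v, Sym2.mem_mk_left v u, Sym2.mem_mk_left v w⟩).symm
      exact this ▸ hue
  exact (Sym2.mem_iff.1 hu_mem).resolve_left hvu.ne'

variable [DecidableEq V]

def matchedVertices (M : Finset (Sym2 V)) : Finset V := M.biUnion Sym2.toFinset

@[simp]
theorem mem_matchedVertices {v : V} : v ∈ matchedVertices M ↔ matchedVert M v := by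
  simp [matchedVertices, matchedVert]

theorem IsMatchingSet.card_matchedVertices (hM : IsMatchingSet G M) :
    #(matchedVertices M) = 2 * #M := by
  rw [matchedVertices, card_biUnion, sum_const_nat fun e he => Sym2.card_toFinset_of_not_isDiag e
    (G.not_isDiag_of_mem_edgeSet (hM.1 e he)), mul_comm]
  intro e he f hf hef
  simp only [Function.onFun, Finset.disjoint_left, Sym2.mem_toFinset]
  exact fun v hve hvf => hef (hM.eq_of_mem_of_mem he hf hve hvf)

variable [Fintype V] [DecidableRel G.Adj]

theorem IsCompleteDIM.neighborFinset_of_mk_mem (hM : IsCompleteDIM G M) {v w : V}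
    (hvw : s(v, w) ∈ M) : G.neighborFinset v = insert w (matchedVertices M)ᶜ := by
  ext u
  simp only [mem_neighborFinset, mem_insert, mem_compl, mem_matchedVertices]
  constructor
  · intro hvu
    by_cases hu : matchedVert M u
    exacts [Or.inl (hM.1.eq_of_adj_of_matchedVert hvw hvu hu), Or.inr hu]
  · rintro (rfl | hu)
    · exact G.mem_edgeSet.1 (hM.1.1.1 _ hvw)
    · exact hM.2.2 v u ⟨_, hvw, Sym2.mem_mk_left v w⟩ hu

theorem IsCompleteDIM.neighborFinset_of_not_matchedVert (hM : IsCompleteDIM G M) {v : V}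
    (hv : ¬ matchedVert M v) : G.neighborFinset v = matchedVertices M := by
  ext u
  simp only [mem_neighborFinset, mem_matchedVertices]
  exact ⟨fun hvu => (hM.1.matchedVert_or_matchedVert_of_adj hvu).resolve_left hv,
    fun hu => (hM.2.2 u v hu hv).symm⟩

end DominatingInducedMatching

/-- The eigenvector is `r` on `A` and `#A` off `A`, where `r ^ 2 = r + #A * #Aᶜ`. -/
theorem isGreatest_spectrum_adjMatrix_of_neighborFinset {V : Type*} [Fintype V] [DecidableEq V]
    (G : SimpleGraph V) [DecidableRel G.Adj] {A : Finset V} (hA : A.Nonempty)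
    (hin : ∀ v ∈ A, ∃ w ∈ A, G.neighborFinset v = insert w Aᶜ)
    (hout : ∀ v ∉ A, G.neighborFinset v = A) :
    IsGreatest (spectrum ℝ (G.adjMatrix ℝ)) ((1 + √(1 + 4 * #A * #Aᶜ)) / 2) := by
  set r := (1 + √(1 + 4 * #A * #Aᶜ)) / 2
  have hsq : √(1 + 4 * #A * #Aᶜ) ^ 2 = 1 + 4 * #A * #Aᶜ := Real.sq_sqrt (by positivity)
  have hr : r * r = r + #A * #Aᶜ := by linear_combination hsq / 4
  have hr0 : 0 < r := by positivity
  have hA0 : (0 : ℝ) < #A := by exact_mod_cast hA.card_pos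
  have : Nonempty V := hA.to_subtype.map Subtype.val
  refine Matrix.isGreatest_spectrum_of_pos_eigenvector (y := fun v => if v ∈ A then r else #A)
    (fun i j => ?_) (fun v => ?_) (funext fun v => ?_)
  · rw [adjMatrix_apply]; split_ifs <;> norm_num
  · split_ifs <;> assumption
  rw [adjMatrix_mulVec_apply, Pi.smul_apply, smul_eq_mul]
  by_cases hv : v ∈ A
  · obtain ⟨w, hw, hN⟩ := hin v hv
    rw [hN, sum_insert (by simpa using hw), if_pos hw, if_pos hv,
      sum_congr rfl fun u hu => if_neg (mem_compl.1 hu), sum_const, nsmul_eq_mul, hr]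
    ring
  · rw [hout v hv, sum_congr rfl fun u hu => if_pos hu, sum_const, nsmul_eq_mul, if_neg hv,
      mul_comm]

theorem stmt_2_general (n m : ℕ) (hm : 0 < m)
    (H : SimpleGraph (Fin n)) [DecidableRel H.Adj]
    (M : Finset (Sym2 (Fin n))) (hM : IsCompleteDIM H M) (hcard : M.card = m) :
    (1 + Real.sqrt (1 + 8 * m * ((n : ℝ) - 2 * m))) / 2 ∈ spectrum ℝ (H.adjMatrix ℝ) ∧
      ∀ μ ∈ spectrum ℝ (H.adjMatrix ℝ),
        μ ≤ (1 + Real.sqrt (1 + 8 * m * ((n : ℝ) - 2 * m))) / 2 := by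
  have hcardA : #(matchedVertices M) = 2 * m := hcard ▸ hM.1.1.card_matchedVertices
  have hcardAc : (#(matchedVertices M)ᶜ : ℝ) = n - 2 * m := by
    rw [card_compl, Nat.cast_sub (card_le_univ _), Fintype.card_fin, hcardA]; push_cast; rfl
  have hin : ∀ v ∈ matchedVertices M, ∃ w ∈ matchedVertices M,
      H.neighborFinset v = insert w (matchedVertices M)ᶜ := by
    intro v hv
    obtain ⟨w, hvw⟩ := (mem_matchedVertices.1 hv).exists_mk_mem
    exact ⟨w, mem_matchedVertices.2 ⟨_, hvw, Sym2.mem_mk_right v w⟩,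
      hM.neighborFinset_of_mk_mem hvw⟩
  have hgreatest := isGreatest_spectrum_adjMatrix_of_neighborFinset H (card_pos.1 (by omega)) hin
    fun v hv => hM.neighborFinset_of_not_matchedVert (by simpa using hv)
  rw [hcardAc, hcardA, Nat.cast_mul, Nat.cast_ofNat, ← mul_assoc,
    show (4 : ℝ) * 2 = 8 by norm_num] at hgreatest
  exact ⟨hgreatest.1, fun μ hμ => hgreatest.2 hμ⟩

/-- If `H` is a graph of order `n` with a complete dominating induced matching of size `m`,
then the largest adjacency eigenvalue (spectral radius) of `H` is `(1+√(1+8m(n−2m)))/2`. -/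
theorem stmt_2 (n m : ℕ) (hm : 0 < m) (hn : 2 * m < n)
    (H : SimpleGraph (Fin n)) [DecidableRel H.Adj]
    (M : Finset (Sym2 (Fin n))) (hM : IsCompleteDIM H M) (hcard : M.card = m) :
    (1 + Real.sqrt (1 + 8 * m * ((n : ℝ) - 2 * m))) / 2 ∈ spectrum ℝ (H.adjMatrix ℝ) ∧
      ∀ μ ∈ spectrum ℝ (H.adjMatrix ℝ),
        μ ≤ (1 + Real.sqrt (1 + 8 * m * ((n : ℝ) - 2 * m))) / 2 :=
  stmt_2_general n m hm H M hM hcard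
end

section
/- Let H be the join of mK₂ with the empty graph on s = n−2m ≥ 1 vertices, where m ≥ 1 and n = 2m + s. Then the adjacency spectrum of H is { (1+√(1+8m(n−2m)))/2, (1−√(1+8m(n−2m)))/2, 1 with multiplicity m−1, 0 with multiplicity n−2m−1, −1 with multiplicity m }. -/
open Matrix Finset
open scoped Classical

/-- The join of `m K₂` with the empty graph on `s` vertices, vertices labeled so that
the `2m` matched vertices (paired as `{2k, 2k+1}`) come first. -/
def dimJoin (m s : ℕ) : SimpleGraph (Fin (2*m+s)) where
  Adj i j := i ≠ j ∧ (((i:ℕ) < 2*m ∧ (j:ℕ) < 2*m ∧ (i:ℕ)/2 = (j:ℕ)/2) ∨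
    ((i:ℕ) < 2*m ∧ 2*m ≤ (j:ℕ)) ∨ (2*m ≤ (i:ℕ) ∧ (j:ℕ) < 2*m))
  symm := by
    constructor
    rintro i j ⟨hne, h⟩
    refine ⟨hne.symm, ?_⟩
    rcases h with ⟨a,b,c⟩|⟨a,b⟩|⟨a,b⟩
    · exact Or.inl ⟨b, a, c.symm⟩
    · exact Or.inr (Or.inr ⟨b, a⟩)
    · exact Or.inr (Or.inl ⟨b, a⟩)
  loopless := ⟨fun i h => h.1 rfl⟩

/-!
Relabel the vertices as `(Fin m × Fin 2) ⊕ Fin s`, matched pairs first. The adjacency matrix then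
has an explicit orthogonal eigenbasis: for both roots `θ` of `θ² = θ + 2ms`, the vector equal to `θ`
on matched and `2m` on unmatched vertices (a lift of an eigenvector of the quotient matrix
`!![1, s; 2m, 0]` of the partition into matched and unmatched vertices); zero-sum vectors constant on
each matched pair and vanishing elsewhere (eigenvalue `1`); zero-sum vectors supported on the
unmatched vertices (eigenvalue `0`); and `(1, -1)` on a single matched pair (eigenvalue `-1`).
Helmert's vectors provide orthogonal zero-sum families of the right sizes. A matrix with an
orthogonal eigenbasis is similar to the diagonal matrix of the corresponding eigenvalues.
-/

open Polynomial
open scoped Kronecker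

section OrthogonalEigenbasis

variable {R n ι : Type*} [Field R] [Fintype n] [DecidableEq n] [Fintype ι]

theorem Matrix.isUnit_det_of_transpose_mul_self_eq_diagonal {P : Matrix n n R} {d : n → R}
    (hP : Pᵀ * P = diagonal d) (hd : ∀ i, d i ≠ 0) : IsUnit P.det := by
  have h := congrArg det hP
  rw [det_mul, det_transpose, det_diagonal] at h
  exact isUnit_iff_ne_zero.mpr fun h0 => by simp [h0, eq_comm, Finset.prod_eq_zero_iff, hd] at h

variable [LinearOrder R] [IsStrictOrderedRing R]

theorem Matrix.charpoly_eq_prod_of_orthogonal_eigenvectors (A : Matrix n n R) (v : ι → n → R)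
    (d : ι → R) (hcard : Fintype.card ι = Fintype.card n) (hv : ∀ i, A *ᵥ v i = d i • v i)
    (horth : Pairwise fun i j => v i ⬝ᵥ v j = 0) (hne : ∀ i, v i ≠ 0) :
    A.charpoly = ∏ i, (X - C (d i)) := by
  obtain e : ι ≃ n := Fintype.equivOfCardEq hcard
  set P : Matrix n n R := of fun x k => v (e.symm k) x
  have hAP : A * P = P * diagonal (d ∘ e.symm) := by
    ext x k
    have hx := congrFun (hv (e.symm k)) x
    simp only [mulVec, dotProduct, Pi.smul_apply, smul_eq_mul] at hx
    rw [mul_diagonal, mul_apply]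
    simp [P, hx, mul_comm]
  have hPP : Pᵀ * P = diagonal fun k => v (e.symm k) ⬝ᵥ v (e.symm k) := by
    ext k l
    by_cases hkl : k = l
    · subst hkl; simp [P, mul_apply, dotProduct]
    · simpa [P, mul_apply, dotProduct, hkl] using horth (e.symm.injective.ne hkl)
  have hdet : IsUnit P.det := isUnit_det_of_transpose_mul_self_eq_diagonal hPP fun k => by
    simpa [dotProduct_self_eq_zero] using hne (e.symm k)
  have hP : IsUnit P := (isUnit_iff_isUnit_det P).mpr hdet
  calc A.charpoly = (hP.unit.val * diagonal (d ∘ e.symm) * hP.unit.val⁻¹).charpoly := by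
        rw [IsUnit.unit_spec, ← hAP, Matrix.mul_assoc, mul_nonsing_inv _ hdet, Matrix.mul_one]
    _ = ∏ i, (X - C (d i)) := by
        rw [charpoly_units_conj, charpoly_diagonal]
        exact Fintype.prod_equiv e.symm _ _ fun _ => rfl

theorem Matrix.roots_charpoly_of_orthogonal_eigenvectors (A : Matrix n n R) (v : ι → n → R)
    (d : ι → R) (hcard : Fintype.card ι = Fintype.card n) (hv : ∀ i, A *ᵥ v i = d i • v i)
    (horth : Pairwise fun i j => v i ⬝ᵥ v j = 0) (hne : ∀ i, v i ≠ 0) :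
    A.charpoly.roots = Finset.univ.val.map d := by
  rw [charpoly_eq_prod_of_orthogonal_eigenvectors A v d hcard hv horth hne,
    Finset.prod_eq_multiset_prod]
  simpa [Multiset.map_map, Function.comp_def] using
    roots_multiset_prod_X_sub_C (Finset.univ.val.map d)

end OrthogonalEigenbasis

section MatchingJoin

/-- The adjacency matrix of `mK₂ ∨ K̄ₛ` for `m = |α|`, `s = |β|`; the matching edges are
`{(p, 0), (p, 1)}`. -/
def matchingJoinAdjMatrix (α β : Type*) [DecidableEq α] (R : Type*) [CommRing R] :
    Matrix ((α × Fin 2) ⊕ β) ((α × Fin 2) ⊕ β) R :=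
  fromBlocks (1 ⊗ₖ !![0, 1; 1, 0]) (of fun _ _ => 1) (of fun _ _ => 1) 0

variable {R α β : Type*} [CommRing R]

variable (α β) in
def quotientLift [Fintype α] (θ : R) : (α × Fin 2) ⊕ β → R :=
  Sum.elim (fun _ => θ) (fun _ => 2 * Fintype.card α)

variable (β) in
def matchedLift (h : α → R) : (α × Fin 2) ⊕ β → R :=
  Sum.elim (fun x => h x.1) 0

variable (α) in
def unmatchedLift (g : β → R) : (α × Fin 2) ⊕ β → R :=
  Sum.elim 0 g

variable (β) in
def alternatingLift (f : α → R) : (α × Fin 2) ⊕ β → R :=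
  Sum.elim (fun x => ![1, -1] x.2 * f x.1) 0

variable [Fintype α] [DecidableEq α] [Fintype β]

theorem matchingJoinAdjMatrix_mulVec (f : α × Fin 2 → R) (g : β → R) :
    matchingJoinAdjMatrix α β R *ᵥ Sum.elim f g =
      Sum.elim (fun x => f (x.1, x.2.rev) + ∑ t, g t) (fun _ => ∑ x, f x) := by
  ext (⟨p, a⟩ | t)
  · fin_cases a <;>
      simp [matchingJoinAdjMatrix, mulVec, dotProduct, Fintype.sum_prod_type, one_apply]
  · simp [matchingJoinAdjMatrix, mulVec, dotProduct]

theorem mulVec_quotientLift {θ : R} (hθ : θ ^ 2 = θ + 2 * Fintype.card α * Fintype.card β) :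
    matchingJoinAdjMatrix α β R *ᵥ quotientLift α β θ = θ • quotientLift α β θ := by
  ext (x | t)
  · simp [quotientLift, matchingJoinAdjMatrix_mulVec]
    linear_combination -hθ
  · simp [quotientLift, matchingJoinAdjMatrix_mulVec, mul_comm]

theorem mulVec_matchedLift {h : α → R} (hh : ∑ p, h p = 0) :
    matchingJoinAdjMatrix α β R *ᵥ matchedLift β h = (1 : R) • matchedLift β h := by
  ext (x | t)
  · simp [matchedLift, matchingJoinAdjMatrix_mulVec]
  · simp [matchedLift, matchingJoinAdjMatrix_mulVec, Fintype.sum_prod_type, ← Finset.mul_sum, hh]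

theorem mulVec_unmatchedLift {g : β → R} (hg : ∑ t, g t = 0) :
    matchingJoinAdjMatrix α β R *ᵥ unmatchedLift α g = (0 : R) • unmatchedLift α g := by
  ext (x | t)
  · simp [unmatchedLift, matchingJoinAdjMatrix_mulVec, hg]
  · simp [unmatchedLift, matchingJoinAdjMatrix_mulVec]

theorem mulVec_alternatingLift (f : α → R) :
    matchingJoinAdjMatrix α β R *ᵥ alternatingLift β f = (-1 : R) • alternatingLift β f := by
  ext (⟨p, a⟩ | t)
  · fin_cases a <;> simp [alternatingLift, matchingJoinAdjMatrix_mulVec]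
  · simp [alternatingLift, matchingJoinAdjMatrix_mulVec, Fintype.sum_prod_type]

end MatchingJoin

section Helmert

variable {R : Type*} [CommRing R] {n : ℕ}

def helmert (j : Fin n) (p : Fin (n + 1)) : R :=
  if p ≤ j.castSucc then 1 else if p = j.succ then -(j + 1 : R) else 0

theorem helmert_dotProduct (j : Fin n) (w : Fin (n + 1) → R) :
    helmert j ⬝ᵥ w = ∑ p ∈ Iic j.castSucc, w p - (j + 1) * w j.succ := by
  simp only [dotProduct, helmert, ite_mul, one_mul, zero_mul, Finset.sum_ite,
    Finset.sum_const_zero, add_zero, filter_ge_eq_Iic, Finset.filter_eq']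
  rw [if_pos (by simp [Fin.le_def]), sum_singleton]
  ring

theorem sum_helmert (j : Fin n) : ∑ p, (helmert j p : R) = 0 := by
  rw [← dotProduct_one, helmert_dotProduct]
  simp

theorem helmert_dotProduct_helmert_of_lt {j k : Fin n} (hjk : j < k) :
    (helmert j : Fin (n + 1) → R) ⬝ᵥ helmert k = 0 := by
  have hle : ∀ p, p ≤ j.succ → (helmert k p : R) = 1 := fun p hp => by
    rw [Fin.le_def, Fin.val_succ] at hp
    rw [Fin.lt_def] at hjk
    simp [helmert, Fin.le_def]
    omega
  rw [helmert_dotProduct, sum_congr rfl fun p hp => hle p ((mem_Iic.mp hp).trans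
    Fin.castSucc_lt_succ.le), hle _ le_rfl]
  simp

theorem pairwise_helmert_dotProduct_eq_zero (n : ℕ) :
    Pairwise fun j k : Fin n => (helmert j : Fin (n + 1) → R) ⬝ᵥ helmert k = 0 := by
  intro j k hjk
  rcases hjk.lt_or_gt with h | h
  · exact helmert_dotProduct_helmert_of_lt h
  · rw [dotProduct_comm]; exact helmert_dotProduct_helmert_of_lt h

end Helmert

section MatchingJoinSpectrum

variable {m s : ℕ}

abbrev MatchingJoinEigenIndex (m s : ℕ) := Fin 2 ⊕ Fin m ⊕ Fin s ⊕ Fin (m + 1)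

def matchingJoinEigenvector (θ₁ θ₂ : ℝ) :
    MatchingJoinEigenIndex m s → (Fin (m + 1) × Fin 2) ⊕ Fin (s + 1) → ℝ :=
  Sum.elim (fun i => quotientLift _ _ (![θ₁, θ₂] i))
    (Sum.elim (fun j => matchedLift _ (helmert j))
      (Sum.elim (fun t => unmatchedLift _ (helmert t))
        (fun p => alternatingLift _ (Pi.single p 1))))

def matchingJoinEigenvalue (θ₁ θ₂ : ℝ) : MatchingJoinEigenIndex m s → ℝ :=
  Sum.elim ![θ₁, θ₂] (Sum.elim (fun _ => 1) (Sum.elim (fun _ => 0) fun _ => -1))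

variable {θ₁ θ₂ : ℝ}

theorem mulVec_matchingJoinEigenvector (hsum : θ₁ + θ₂ = 1)
    (hprod : θ₁ * θ₂ = -(2 * (m + 1) * (s + 1))) (i : MatchingJoinEigenIndex m s) :
    matchingJoinAdjMatrix _ _ ℝ *ᵥ matchingJoinEigenvector θ₁ θ₂ i =
      matchingJoinEigenvalue θ₁ θ₂ i • matchingJoinEigenvector θ₁ θ₂ i := by
  rcases i with i | j | t | p
  · refine mulVec_quotientLift ?_
    fin_cases i
    · simp only [Fin.zero_eta, cons_val_zero, Fintype.card_fin, Nat.cast_add, Nat.cast_one]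
      linear_combination θ₁ * hsum - hprod
    · simp only [Fin.mk_one, cons_val_one, cons_val_fin_one, Fintype.card_fin, Nat.cast_add,
        Nat.cast_one]
      linear_combination θ₂ * hsum - hprod
  · exact mulVec_matchedLift (sum_helmert j)
  · exact mulVec_unmatchedLift (sum_helmert t)
  · exact mulVec_alternatingLift _

theorem pairwise_matchingJoinEigenvector_dotProduct_eq_zero
    (hprod : θ₁ * θ₂ = -(2 * (m + 1) * (s + 1))) :
    Pairwise fun i j : MatchingJoinEigenIndex m s =>
      matchingJoinEigenvector θ₁ θ₂ i ⬝ᵥ matchingJoinEigenvector θ₁ θ₂ j = 0 := by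
  rintro (i | i | i | i) (j | j | j | j) hij
  all_goals simp only [ne_eq, Sum.inl.injEq, Sum.inr.injEq, reduceCtorEq,
    not_false_eq_true] at hij
  all_goals simp [matchingJoinEigenvector, quotientLift, matchedLift, unmatchedLift,
    alternatingLift, dotProduct, Fintype.sum_prod_type, ← Finset.mul_sum, ← Finset.sum_mul,
    sum_helmert, Pi.single_apply]
  · fin_cases i <;> fin_cases j <;> simp at hij ⊢ <;> linear_combination (2 * (m + 1)) * hprod
  · exact pairwise_helmert_dotProduct_eq_zero m hij
  · exact pairwise_helmert_dotProduct_eq_zero s hij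
  · exact Ne.symm hij

theorem matchingJoinEigenvector_ne_zero (i : MatchingJoinEigenIndex m s) :
    matchingJoinEigenvector θ₁ θ₂ i ≠ 0 := by
  rcases i with i | j | t | p <;> intro h
  · exact Nat.cast_add_one_ne_zero m
      (by simpa [matchingJoinEigenvector, quotientLift] using congrFun h (.inr 0))
  · simpa [matchingJoinEigenvector, matchedLift, helmert] using congrFun h (.inl (0, 0))
  · simpa [matchingJoinEigenvector, unmatchedLift, helmert] using congrFun h (.inr 0)
  · simpa [matchingJoinEigenvector, alternatingLift] using congrFun h (.inl (p, 0))

theorem roots_charpoly_matchingJoinAdjMatrix (hsum : θ₁ + θ₂ = 1)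
    (hprod : θ₁ * θ₂ = -(2 * (m + 1) * (s + 1))) :
    (matchingJoinAdjMatrix (Fin (m + 1)) (Fin (s + 1)) ℝ).charpoly.roots =
      {θ₁, θ₂} + Multiset.replicate m 1 + Multiset.replicate s 0 +
        Multiset.replicate (m + 1) (-1) := by
  have hcard : Fintype.card (MatchingJoinEigenIndex m s) =
      Fintype.card ((Fin (m + 1) × Fin 2) ⊕ Fin (s + 1)) := by
    simp only [Fintype.card_sum, Fintype.card_prod, Fintype.card_fin]
    ring
  rw [roots_charpoly_of_orthogonal_eigenvectors _ _ _ hcard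
    (mulVec_matchingJoinEigenvector hsum hprod)
    (pairwise_matchingJoinEigenvector_dotProduct_eq_zero hprod) matchingJoinEigenvector_ne_zero]
  simp [matchingJoinEigenvalue, ← Finset.univ_disjSum_univ, Multiset.map_disjSum,
    Multiset.map_const', add_assoc]
  rfl

end MatchingJoinSpectrum

def dimJoinEquiv (m s : ℕ) : (Fin m × Fin 2) ⊕ Fin s ≃ Fin (2 * m + s) :=
  ((finProdFinEquiv.trans (finCongr (mul_comm m 2))).sumCongr (Equiv.refl _)).trans finSumFinEquiv

theorem adjMatrix_dimJoin_submatrix (m s : ℕ) :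
    ((dimJoin m s).adjMatrix ℝ).submatrix (dimJoinEquiv m s) (dimJoinEquiv m s) =
      matchingJoinAdjMatrix (Fin m) (Fin s) ℝ := by
  ext (⟨p, a⟩ | t) (⟨q, b⟩ | u)
  all_goals simp [dimJoinEquiv, matchingJoinAdjMatrix, SimpleGraph.adjMatrix_apply, dimJoin,
    one_apply]
  · fin_cases a <;> fin_cases b <;> by_cases hpq : p = q <;> simp [hpq] <;> omega
  all_goals simp [Fin.ext_iff]; omega

theorem charpoly_adjMatrix_dimJoin (m s : ℕ) :
    ((dimJoin m s).adjMatrix ℝ).charpoly = (matchingJoinAdjMatrix (Fin m) (Fin s) ℝ).charpoly := by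
  rw [← adjMatrix_dimJoin_submatrix, ← charpoly_reindex (dimJoinEquiv m s).symm]
  rfl

/-- Adjacency spectrum of `H = mK₂ ∨ \bar{K}_s` (`n = 2m+s`):
`{(1±√(1+8m(n−2m)))/2, 1^{[m−1]}, 0^{[n−2m−1]}, (−1)^{[m]}}`. -/
theorem stmt_5 (m s : ℕ) (hm : 1 ≤ m) (hs : 1 ≤ s) :
    ((dimJoin m s).adjMatrix ℝ).charpoly.roots =
      {(1 + Real.sqrt (1 + 8 * m * (((2 * m + s : ℕ) : ℝ) - 2 * m))) / 2,
       (1 - Real.sqrt (1 + 8 * m * (((2 * m + s : ℕ) : ℝ) - 2 * m))) / 2} +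
      Multiset.replicate (m - 1) 1 + Multiset.replicate (s - 1) 0 +
      Multiset.replicate m (-1) := by
  obtain ⟨m, rfl⟩ := Nat.exists_eq_add_of_le' hm
  obtain ⟨s, rfl⟩ := Nat.exists_eq_add_of_le' hs
  have hunmatched : (((2 * (m + 1) + (s + 1) : ℕ) : ℝ) - 2 * ↑(m + 1)) = s + 1 := by
    push_cast
    ring
  rw [hunmatched]
  set r := Real.sqrt (1 + 8 * ↑(m + 1) * (s + 1 : ℝ))
  have hr : r ^ 2 = 1 + 8 * ↑(m + 1) * (s + 1) := Real.sq_sqrt (by positivity)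
  rw [charpoly_adjMatrix_dimJoin, roots_charpoly_matchingJoinAdjMatrix (θ₁ := (1 + r) / 2)
    (θ₂ := (1 - r) / 2) (by ring) (by push_cast at hr; linear_combination -hr / 4)]
  simp
end

section
/- Let G be a graph of order n with a dominating induced matching M of size m, with spectral radius ρ, and suppose G is not the join of mK₂ with an empty graph (so that n² − 4(ρ²−ρ) > 0). Then ⌈(n − √(n² − 4(ρ²−ρ)))/4⌉ ≤ m ≤ ⌊(n + √(n² − 4(ρ²−ρ)))/4⌋. -/
open Matrix Finset
open scoped Classical

/-!
Let `T = V(M)`, of size `2m`; its complement `S` is independent. Every edge of `G` lies in `M` or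
joins `T` to `S`, so for `z ≥ 0`, with `a = ‖z|_T‖²` and `b = ‖z|_S‖²`,
`zᵀ A z ≤ a + 2 (∑_T z)(∑_S z) ≤ a + 2 √(2m(n - 2m) a b)` by Cauchy–Schwarz, and this is at most
`(1/2 + √(1/4 + 2m(n - 2m))) (a + b)`. Testing an eigenvector `y` of `ρ` against `|y|` gives
`ρ ≤ 1/2 + √(1/4 + 2m(n - 2m))`; as `ρ ≥ 0` (the eigenvalues sum to `tr A = 0`) this is
`4m² - 2nm + ρ² - ρ ≤ 0`, and `m` lies between the roots of this quadratic.
-/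

open SimpleGraph

theorem Matrix.dotProduct_mulVec_le_of_le {ι R : Type*} [Fintype ι] [Semiring R] [PartialOrder R]
    [IsOrderedRing R] {A B : Matrix ι ι R} (hAB : ∀ i j, A i j ≤ B i j) {x : ι → R}
    (hx : 0 ≤ x) : x ⬝ᵥ A *ᵥ x ≤ x ⬝ᵥ B *ᵥ x :=
  dotProduct_le_dotProduct_of_nonneg_left
    (fun i => dotProduct_le_dotProduct_of_nonneg_right (hAB i) hx) hx

theorem SimpleGraph.dotProduct_adjMatrix_mulVec_le {V R : Type*} [Fintype V] [Field R]
    [LinearOrder R] [IsStrictOrderedRing R] [StarRing R] [TrivialStar R]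
    (H : SimpleGraph V) [DecidableRel H.Adj] (x : V → R) :
    x ⬝ᵥ H.adjMatrix R *ᵥ x ≤ ∑ i, H.degree i * x i * x i := by
  have := (H.posSemidef_lapMatrix R).dotProduct_mulVec_nonneg x
  rw [star_trivial, lapMatrix, sub_mulVec, dotProduct_sub, dotProduct_mulVec_degMatrix] at this
  linarith

theorem dotProduct_vecMulVec_mulVec {ι R : Type*} [Fintype ι] [CommSemiring R]
    (x u v : ι → R) : x ⬝ᵥ vecMulVec u v *ᵥ x = (x ⬝ᵥ u) * (v ⬝ᵥ x) := by
  rw [vecMulVec_mulVec, op_smul_eq_smul, dotProduct_smul, smul_eq_mul, mul_comm]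

theorem Matrix.exists_mulVec_eq_smul_of_mem_spectrum {ι K : Type*} [Fintype ι] [DecidableEq ι]
    [Field K] {A : Matrix ι ι K} {μ : K} (hμ : μ ∈ spectrum K A) :
    ∃ y : ι → K, y ≠ 0 ∧ A *ᵥ y = μ • y := by
  rw [← spectrum_toLin', ← Module.End.hasEigenvalue_iff_mem_spectrum] at hμ
  obtain ⟨y, hy⟩ := hμ.exists_hasEigenvector
  exact ⟨y, hy.2, by rw [← toLin'_apply, hy.apply_eq_smul]⟩

theorem Matrix.le_of_mem_spectrum_of_dotProduct_mulVec_le {ι : Type*} [Fintype ι]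
    [DecidableEq ι] {A : Matrix ι ι ℝ} (hA : ∀ i j, 0 ≤ A i j) {l : ℝ}
    (hl : ∀ z : ι → ℝ, 0 ≤ z → z ⬝ᵥ A *ᵥ z ≤ l * (z ⬝ᵥ z)) {μ : ℝ}
    (hμ : μ ∈ spectrum ℝ A) : μ ≤ l := by
  obtain ⟨y, hy0, hy⟩ := exists_mulVec_eq_smul_of_mem_spectrum hμ
  set z : ι → ℝ := fun i => |y i|
  have hyy : 0 < y ⬝ᵥ y :=
    lt_of_le_of_ne (sum_nonneg fun i _ => mul_self_nonneg _)
      (Ne.symm (mt dotProduct_self_eq_zero.mp hy0))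
  have hzz : z ⬝ᵥ z = y ⬝ᵥ y := by simp only [z, dotProduct, abs_mul_abs_self]
  have hquad : y ⬝ᵥ A *ᵥ y ≤ z ⬝ᵥ A *ᵥ z := by
    simp only [z, dotProduct, mulVec, mul_sum]
    refine sum_le_sum fun i _ => sum_le_sum fun j _ => ?_
    calc y i * (A i j * y j) ≤ |y i * (A i j * y j)| := le_abs_self _
      _ = |y i| * (A i j * |y j|) := by rw [abs_mul, abs_mul, abs_of_nonneg (hA i j)]
  have hμyy : μ * (y ⬝ᵥ y) ≤ l * (y ⬝ᵥ y) := by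
    calc μ * (y ⬝ᵥ y) = y ⬝ᵥ A *ᵥ y := by rw [hy, dotProduct_smul, smul_eq_mul]
      _ ≤ l * (y ⬝ᵥ y) := hzz ▸ hquad.trans (hl z fun i => abs_nonneg (y i))
  exact le_of_mul_le_mul_right hμyy hyy

theorem SimpleGraph.nonneg_of_forall_mem_spectrum_adjMatrix_le {V : Type*} [Fintype V]
    [DecidableEq V] (G : SimpleGraph V) [DecidableRel G.Adj] {ρ : ℝ}
    (hρ : ρ ∈ spectrum ℝ (G.adjMatrix ℝ)) (hmax : ∀ μ ∈ spectrum ℝ (G.adjMatrix ℝ), μ ≤ ρ) :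
    0 ≤ ρ := by
  have : Nonempty V := by
    by_contra hV
    rw [not_nonempty_iff] at hV
    simp [spectrum.of_subsingleton] at hρ
  have hA := G.isHermitian_adjMatrix ℝ
  have hsum : ∑ i, hA.eigenvalues i ≤ Fintype.card V * ρ := by
    simpa using sum_le_sum fun i (_ : i ∈ univ) => hmax _ (hA.eigenvalues_mem_spectrum_real i)
  have htrace : ∑ i, hA.eigenvalues i = 0 := by
    simpa using (hA.trace_eq_sum_eigenvalues).symm
  exact nonneg_of_mul_nonneg_right (htrace ▸ hsum) (by exact_mod_cast Fintype.card_pos)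

/-- With `λ = 1/2 + √(1/4 + ks)` the larger root of `λ² - λ = ks`, the bound is the
AM-GM inequality `4(λ² - λ)ab ≤ ((λ - 1)a + λb)²`. -/
theorem add_two_mul_le_of_sq_le {a b P Q k s : ℝ} (ha : 0 ≤ a) (hb : 0 ≤ b) (hk : 0 ≤ k)
    (hs : 0 ≤ s) (hP : P ^ 2 ≤ k * a) (hQ : Q ^ 2 ≤ s * b) :
    a + 2 * P * Q ≤ (1 / 2 + √(1 / 4 + k * s)) * (a + b) := by
  set l := 1 / 2 + √(1 / 4 + k * s)
  have hl : l ^ 2 - l = k * s := by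
    have := Real.sq_sqrt (show 0 ≤ 1 / 4 + k * s by positivity)
    linear_combination this
  have hl1 : 1 ≤ l := by
    have : 1 / 2 ≤ √(1 / 4 + k * s) :=
      (Real.le_sqrt (by norm_num) (by positivity)).mpr (by nlinarith [mul_nonneg hk hs])
    simp only [l]
    linarith
  have hPQ : (2 * P * Q) ^ 2 ≤ ((l - 1) * a + l * b) ^ 2 := by
    have := mul_le_mul hP hQ (sq_nonneg Q) (le_trans (sq_nonneg P) hP)
    calc (2 * P * Q) ^ 2 = 4 * (P ^ 2 * Q ^ 2) := by ring
      _ ≤ 4 * (l ^ 2 - l) * a * b := by rw [hl]; linarith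
      _ ≤ ((l - 1) * a + l * b) ^ 2 := by nlinarith [sq_nonneg ((l - 1) * a - l * b)]
  have := (abs_le_of_sq_le_sq' hPQ (by nlinarith)).2
  linarith

theorem sq_sub_self_le_of_le_half_add_sqrt {ρ c : ℝ} (hρ : 0 ≤ ρ) (hc : 0 ≤ c)
    (h : ρ ≤ 1 / 2 + √(1 / 4 + c)) : ρ ^ 2 - ρ ≤ c := by
  have hsqrt : 1 / 2 ≤ √(1 / 4 + c) := Real.le_sqrt_of_sq_le (by linarith)
  have := sq_le_sq' (by linarith : -√(1 / 4 + c) ≤ ρ - 1 / 2)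
    (by linarith : ρ - 1 / 2 ≤ √(1 / 4 + c))
  rw [Real.sq_sqrt (by linarith)] at this
  linarith

theorem ceil_le_and_le_floor_of_sq_sub_le {N D : ℝ} {m : ℤ} (h : (N - 4 * m) ^ 2 ≤ D) :
    ⌈(N - √D) / 4⌉ ≤ m ∧ m ≤ ⌊(N + √D) / 4⌋ := by
  obtain ⟨hlo, hhi⟩ := abs_le.mp (Real.abs_le_sqrt h)
  exact ⟨Int.ceil_le.mpr (by linarith), Int.le_floor.mpr (by linarith)⟩

section Matching

variable {V : Type*} {G : SimpleGraph V} {M : Finset (Sym2 V)}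

noncomputable def matchedFinset [Fintype V] (M : Finset (Sym2 V)) : Finset V :=
  univ.filter (matchedVert M)

theorem mem_matchedFinset [Fintype V] {v : V} : v ∈ matchedFinset M ↔ matchedVert M v := by
  simp [matchedFinset]

theorem IsMatchingSet.eq_of_mk_mem (hM : IsMatchingSet G M) {u v₁ v₂ : V}
    (h₁ : s(u, v₁) ∈ M) (h₂ : s(u, v₂) ∈ M) : v₁ = v₂ := by
  by_contra hne
  exact hM.2 _ h₁ _ h₂ (fun h => hne (Sym2.congr_right.mp h))
    ⟨u, Sym2.mem_mk_left u v₁, Sym2.mem_mk_left u v₂⟩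

theorem IsMatchingSet.card_matchedFinset [Fintype V] (hM : IsMatchingSet G M) :
    #(matchedFinset M) = 2 * #M := by
  have hT : matchedFinset M = M.biUnion (fun e => univ.filter (· ∈ e)) := by
    ext v
    simp [mem_matchedFinset, matchedVert]
  rw [hT, card_biUnion]
  · rw [sum_const_nat fun e he => ?_, mul_comm]
    induction e with
    | _ a b =>
      have hab : a ≠ b := (G.mem_edgeSet.mp (hM.1 _ he)).ne
      have : univ.filter (· ∈ s(a, b)) = {a, b} := by
        ext v
        simp
      rw [this, card_pair hab]
  · intro e he f hf hef
    simp only [Finset.disjoint_left, mem_filter, mem_univ, true_and]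
    exact fun v hve hvf => hM.2 e he f hf hef ⟨v, hve, hvf⟩

theorem IsMatchingSet.two_mul_card_le [Fintype V] (hM : IsMatchingSet G M) :
    2 * #M ≤ Fintype.card V :=
  hM.card_matchedFinset ▸ card_le_univ _

theorem IsDIM.matchedVert_iff_not_of_adj (hM : IsDIM G M) {u v : V} (h : G.Adj u v)
    (he : s(u, v) ∉ M) : matchedVert M u ↔ ¬ matchedVert M v := by
  obtain ⟨f, ⟨hfM, w, hwe, hwf⟩, huniq⟩ := hM.2 _ (G.mem_edgeSet.mpr h) he
  constructor
  · rintro ⟨e₁, he₁, hue₁⟩ ⟨e₂, he₂, hve₂⟩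
    have h₁ : e₁ = f := huniq e₁ ⟨he₁, u, Sym2.mem_mk_left u v, hue₁⟩
    have h₂ : e₂ = f := huniq e₂ ⟨he₂, v, Sym2.mem_mk_right u v, hve₂⟩
    subst h₁ h₂
    exact he ((Sym2.mem_and_mem_iff h.ne).mp ⟨hue₁, hve₂⟩ ▸ hfM)
  · intro hv
    rcases Sym2.mem_iff.mp hwe with rfl | rfl
    · exact ⟨f, hfM, hwf⟩
    · exact absurd ⟨f, hfM, hwf⟩ hv

theorem IsMatchingSet.degree_fromEdgeSet_le [Fintype V] (hM : IsMatchingSet G M) (v : V)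
    [Fintype ((fromEdgeSet (M : Set (Sym2 V))).neighborSet v)] :
    (fromEdgeSet (M : Set (Sym2 V))).degree v ≤ if v ∈ matchedFinset M then 1 else 0 := by
  split_ifs with hv
  · refine card_le_one.mpr fun u₁ h₁ u₂ h₂ => ?_
    simp only [mem_neighborFinset, fromEdgeSet_adj] at h₁ h₂
    exact hM.eq_of_mk_mem h₁.1 h₂.1
  · refine Nat.le_zero.mpr (card_eq_zero.mpr (eq_empty_of_forall_notMem fun u hu => hv ?_))
    simp only [mem_neighborFinset, fromEdgeSet_adj] at hu
    exact mem_matchedFinset.mpr ⟨_, hu.1, Sym2.mem_mk_left v u⟩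

end Matching

section DIM

variable {V : Type*} [Fintype V] {G : SimpleGraph V} [DecidableRel G.Adj] {M : Finset (Sym2 V)}

/-- `vecMulVec a b + (vecMulVec a b)ᵀ` is the adjacency matrix of the complete bipartite graph
between `V(M)` and its complement. -/
theorem IsDIM.adjMatrix_le (hM : IsDIM G M) (u v : V) :
    let a : V → ℝ := fun w => if w ∈ matchedFinset M then 1 else 0
    let b : V → ℝ := fun w => if w ∈ (matchedFinset M)ᶜ then 1 else 0
    G.adjMatrix ℝ u v ≤ (fromEdgeSet (M : Set (Sym2 V))).adjMatrix ℝ u v + vecMulVec a b u v +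
      (vecMulVec a b)ᵀ u v := by
  intro a b
  have ha : ∀ w, 0 ≤ a w := fun w => by positivity
  have hb : ∀ w, 0 ≤ b w := fun w => by positivity
  simp only [adjMatrix_apply, vecMulVec_apply, transpose_apply]
  have hH : (0 : ℝ) ≤ if (fromEdgeSet (M : Set (Sym2 V))).Adj u v then 1 else 0 := by positivity
  have hab := mul_nonneg (ha u) (hb v)
  have hba := mul_nonneg (ha v) (hb u)
  by_cases hadj : G.Adj u v
  · rw [if_pos hadj]
    by_cases he : s(u, v) ∈ M
    · rw [if_pos (by simp [he, hadj.ne])]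
      linarith
    · have := hM.matchedVert_iff_not_of_adj hadj he
      by_cases hu : matchedVert M u <;> simp_all [a, b, mem_matchedFinset, Finset.mem_compl]
  · rw [if_neg hadj]
    linarith

theorem IsDIM.dotProduct_adjMatrix_mulVec_le (hM : IsDIM G M) {z : V → ℝ} (hz : 0 ≤ z) :
    z ⬝ᵥ G.adjMatrix ℝ *ᵥ z ≤ ∑ v ∈ matchedFinset M, z v ^ 2 +
      2 * (∑ v ∈ matchedFinset M, z v) * ∑ v ∈ (matchedFinset M)ᶜ, z v := by
  set T := matchedFinset M
  set H := fromEdgeSet (M : Set (Sym2 V))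
  set a : V → ℝ := fun w => if w ∈ T then 1 else 0
  set b : V → ℝ := fun w => if w ∈ Tᶜ then 1 else 0
  have hH : z ⬝ᵥ H.adjMatrix ℝ *ᵥ z ≤ ∑ v ∈ T, z v ^ 2 := by
    calc z ⬝ᵥ H.adjMatrix ℝ *ᵥ z ≤ ∑ v, H.degree v * z v * z v :=
          H.dotProduct_adjMatrix_mulVec_le z
      _ ≤ ∑ v, (if v ∈ T then 1 else 0) * z v * z v := by
        refine sum_le_sum fun v _ => mul_le_mul_of_nonneg_right
          (mul_le_mul_of_nonneg_right ?_ (hz v)) (hz v)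
        exact_mod_cast hM.1.degree_fromEdgeSet_le v
      _ = ∑ v ∈ T, z v ^ 2 := by simp [sq, Finset.sum_ite_mem]
  have hza : z ⬝ᵥ a = ∑ v ∈ T, z v := by simp [a, dotProduct, Finset.sum_ite_mem]
  have hbz : b ⬝ᵥ z = ∑ v ∈ Tᶜ, z v := by
    simp only [b, dotProduct, ite_mul, one_mul, zero_mul, Finset.sum_ite_mem, univ_inter]
  have hcut : z ⬝ᵥ (vecMulVec a b)ᵀ *ᵥ z = z ⬝ᵥ vecMulVec a b *ᵥ z := by
    rw [dotProduct_mulVec, vecMul_transpose, dotProduct_comm]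
  calc z ⬝ᵥ G.adjMatrix ℝ *ᵥ z
      ≤ z ⬝ᵥ (H.adjMatrix ℝ + vecMulVec a b + (vecMulVec a b)ᵀ) *ᵥ z :=
        dotProduct_mulVec_le_of_le (fun u v => hM.adjMatrix_le u v) hz
    _ = z ⬝ᵥ H.adjMatrix ℝ *ᵥ z + 2 * (∑ v ∈ T, z v) * ∑ v ∈ Tᶜ, z v := by
        rw [add_mulVec, add_mulVec, dotProduct_add, dotProduct_add, hcut,
          dotProduct_vecMulVec_mulVec, hza, hbz]
        ring
    _ ≤ _ := by linarith

theorem IsDIM.dotProduct_adjMatrix_mulVec_le_mul (hM : IsDIM G M) {z : V → ℝ} (hz : 0 ≤ z) :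
    z ⬝ᵥ G.adjMatrix ℝ *ᵥ z ≤
      (1 / 2 + √(1 / 4 + 2 * #M * (Fintype.card V - 2 * #M))) * (z ⬝ᵥ z) := by
  set T := matchedFinset M
  have hT : (#T : ℝ) = 2 * #M := by exact_mod_cast hM.1.card_matchedFinset
  have hTc : (#Tᶜ : ℝ) = Fintype.card V - 2 * #M := by
    rw [card_compl, Nat.cast_sub (card_le_univ T), hT]
  have hzz : z ⬝ᵥ z = ∑ v ∈ T, z v ^ 2 + ∑ v ∈ Tᶜ, z v ^ 2 := by
    simp only [dotProduct, ← sq, sum_add_sum_compl]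
  rw [hzz, ← hTc, ← hT]
  exact (hM.dotProduct_adjMatrix_mulVec_le hz).trans <| add_two_mul_le_of_sq_le
    (sum_nonneg fun v _ => sq_nonneg _) (sum_nonneg fun v _ => sq_nonneg _) (Nat.cast_nonneg _)
    (Nat.cast_nonneg _) sq_sum_le_card_mul_sum_sq sq_sum_le_card_mul_sum_sq

end DIM

theorem stmt_11_general (n m : ℕ) (G : SimpleGraph (Fin n)) [DecidableRel G.Adj]
    (M : Finset (Sym2 (Fin n))) (hM : IsDIM G M) (hcard : M.card = m)
    (ρ : ℝ) (hρ₁ : ρ ∈ spectrum ℝ (G.adjMatrix ℝ))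
    (hρ₂ : ∀ μ ∈ spectrum ℝ (G.adjMatrix ℝ), μ ≤ ρ) :
    ⌈((n : ℝ) - Real.sqrt ((n : ℝ)^2 - 4 * (ρ^2 - ρ))) / 4⌉ ≤ (m : ℤ) ∧
      (m : ℤ) ≤ ⌊((n : ℝ) + Real.sqrt ((n : ℝ)^2 - 4 * (ρ^2 - ρ))) / 4⌋ := by
  subst hcard
  have hn : (2 * #M : ℝ) ≤ n := by exact_mod_cast (Fintype.card_fin n ▸ hM.1.two_mul_card_le)
  have hρ : ρ ≤ 1 / 2 + √(1 / 4 + 2 * #M * ((n : ℝ) - 2 * #M)) := by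
    refine le_of_mem_spectrum_of_dotProduct_mulVec_le (fun i j => ?_) (fun z hz => ?_) hρ₁
    · rw [adjMatrix_apply]
      positivity
    · simpa using hM.dotProduct_adjMatrix_mulVec_le_mul hz
  have hρ₀ := G.nonneg_of_forall_mem_spectrum_adjMatrix_le hρ₁ hρ₂
  have hρ' := sq_sub_self_le_of_le_half_add_sqrt hρ₀ (mul_nonneg (by positivity) (by linarith)) hρ
  exact_mod_cast ceil_le_and_le_floor_of_sq_sub_le (m := #M) (by push_cast; nlinarith)

/-- If `G` has order `n`, a DIM `M` of size `m`, adjacency spectral radius `ρ`, and `G`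
is not the complete-DIM graph `K_{M,S}` (so `n² − 4(ρ²−ρ) > 0`), then
`⌈(n−√(n²−4(ρ²−ρ)))/4⌉ ≤ m ≤ ⌊(n+√(n²−4(ρ²−ρ)))/4⌋`. -/
theorem stmt_11 (n m : ℕ) (G : SimpleGraph (Fin n)) [DecidableRel G.Adj]
    (M : Finset (Sym2 (Fin n))) (hM : IsDIM G M) (hcard : M.card = m)
    (hnot : ¬ IsCompleteDIM G M)
    (ρ : ℝ) (hρ₁ : ρ ∈ spectrum ℝ (G.adjMatrix ℝ))
    (hρ₂ : ∀ μ ∈ spectrum ℝ (G.adjMatrix ℝ), μ ≤ ρ) :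
    ⌈((n : ℝ) - Real.sqrt ((n : ℝ)^2 - 4 * (ρ^2 - ρ))) / 4⌉ ≤ (m : ℤ) ∧
      (m : ℤ) ≤ ⌊((n : ℝ) + Real.sqrt ((n : ℝ)^2 - 4 * (ρ^2 - ρ))) / 4⌋ :=
  stmt_11_general n m G M hM hcard ρ hρ₁ hρ₂
end

section
/- Let G be a graph of order n with minimum degree δ and adjacency spectral radius ρ. If G has a dominating induced matching M, then |M| ≥ n(2δ − ρ)/(2(2δ − 1)) (assuming δ ≥ 1). -/
open Matrix Finset
open scoped Classical

/-! Testing the all-ones vector in the Rayleigh quotient gives `∑ d(v) ≤ nρ`. On the other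
side, the unmatched vertices `S` of a dominating induced matching `M` form an independent set,
and every matched vertex has exactly one matched neighbour, its partner. Counting the edges
between `V(M)` and `S` from both ends gives
`∑ d(v) = 2|M| + 2 ∑_{v ∈ S} d(v) ≥ 2|M| + 2(n - 2|M|)δ`. -/

open scoped MatrixOrder

theorem Matrix.IsHermitian.dotProduct_mulVec_le {ι : Type*} [Fintype ι] [DecidableEq ι]
    {A : Matrix ι ι ℝ} (hA : A.IsHermitian) {ρ : ℝ}
    (hρ : ∀ μ ∈ spectrum ℝ A, μ ≤ ρ) (x : ι → ℝ) :
    x ⬝ᵥ A *ᵥ x ≤ ρ * (x ⬝ᵥ x) := by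
  have hle : A ≤ algebraMap ℝ _ ρ := le_algebraMap_of_spectrum_le hρ hA
  simpa [Algebra.algebraMap_eq_smul_one, sub_mulVec, smul_mulVec, dotProduct_sub,
    dotProduct_smul] using (Matrix.le_iff.mp hle).dotProduct_mulVec_nonneg x

namespace SimpleGraph

variable {V : Type*} [Fintype V] (G : SimpleGraph V) [DecidableRel G.Adj]

theorem sum_degree_le_card_mul [DecidableEq V] {ρ : ℝ}
    (hρ : ∀ μ ∈ spectrum ℝ (G.adjMatrix ℝ), μ ≤ ρ) :
    ∑ v, (G.degree v : ℝ) ≤ Fintype.card V * ρ := by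
  have := (G.isHermitian_adjMatrix ℝ).dotProduct_mulVec_le hρ (Function.const V 1)
  simpa [dotProduct, adjMatrix_mulVec_const_apply, mul_comm] using this

theorem degree_eq_card_filter_add_card_filter_compl [DecidableEq V] (T : Finset V) (v : V) :
    G.degree v = #{w ∈ T | G.Adj v w} + #{w ∈ Tᶜ | G.Adj v w} := by
  rw [← card_union_of_disjoint (disjoint_filter_filter disjoint_compl_right), ← filter_union,
    union_compl, ← neighborFinset_eq_filter, card_neighborFinset_eq_degree]

theorem sum_degree_eq_of_compl_independent [DecidableEq V] (T : Finset V)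
    (hT : ∀ v ∉ T, ∀ w ∉ T, ¬ G.Adj v w) :
    ∑ v, G.degree v = ∑ v ∈ T, #{w ∈ T | G.Adj v w} + 2 * ∑ v ∈ Tᶜ, G.degree v := by
  have hcross : ∑ v ∈ T, #{w ∈ Tᶜ | G.Adj v w} = ∑ w ∈ Tᶜ, G.degree w := by
    refine (sum_card_bipartiteAbove_eq_sum_card_bipartiteBelow (r := G.Adj)).trans
      (sum_congr rfl fun w hw => ?_)
    rw [← card_neighborFinset_eq_degree, neighborFinset_eq_filter, bipartiteBelow]
    congr 1
    ext u
    simp only [mem_filter, mem_univ, true_and, G.adj_comm u w, and_iff_right_iff_imp]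
    intro hwu
    by_contra hu
    exact hT w (mem_compl.mp hw) u hu hwu
  rw [← sum_add_sum_compl T,
    sum_congr rfl fun v _ => G.degree_eq_card_filter_add_card_filter_compl T v,
    sum_add_distrib, hcross]
  ring

end SimpleGraph

section DominatingInducedMatching

variable {V : Type*} {G : SimpleGraph V} {M : Finset (Sym2 V)}

theorem IsDIM.not_adj_of_not_matchedVert (hM : IsDIM G M) {v w : V} (hv : ¬ matchedVert M v)
    (hw : ¬ matchedVert M w) : ¬ G.Adj v w := by
  intro hadj
  have hvw : s(v, w) ∉ M := fun h => hv ⟨_, h, Sym2.mem_mk_left v w⟩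
  obtain ⟨f, ⟨hf, x, hxe, hxf⟩, -⟩ := hM.2 _ hadj hvw
  rcases Sym2.mem_iff.mp hxe with rfl | rfl
  exacts [hv ⟨f, hf, hxf⟩, hw ⟨f, hf, hxf⟩]

theorem IsDIM.isInducedMatching (hM : IsDIM G M) : IsInducedMatching G M := by
  refine ⟨hM.1, fun e he hmatched => ?_⟩
  induction e using Sym2.ind with
  | _ v w =>
    by_contra hvw
    obtain ⟨g, -, hg⟩ := hM.2 _ he hvw
    obtain ⟨f, hf, hvf⟩ := hmatched v (Sym2.mem_mk_left v w)
    obtain ⟨f', hf', hwf'⟩ := hmatched w (Sym2.mem_mk_right v w)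
    have hff' : f = f' :=
      (hg f ⟨hf, v, Sym2.mem_mk_left v w, hvf⟩).trans
        (hg f' ⟨hf', w, Sym2.mem_mk_right v w, hwf'⟩).symm
    subst hff'
    exact hvw ((Sym2.mem_and_mem_iff (G.ne_of_adj he)).mp ⟨hvf, hwf'⟩ ▸ hf)

variable [DecidableEq V]

def matchedVerts (M : Finset (Sym2 V)) : Finset V := M.biUnion Sym2.toFinset

theorem mem_matchedVerts {v : V} : v ∈ matchedVerts M ↔ matchedVert M v := by
  simp [matchedVerts, matchedVert, Sym2.mem_toFinset]

theorem IsMatchingSet.card_matchedVerts (hM : IsMatchingSet G M) :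
    #(matchedVerts M) = 2 * #M := by
  rw [matchedVerts, card_biUnion, mul_comm]
  · exact sum_const_nat fun e he =>
      Sym2.card_toFinset_of_not_isDiag e (G.not_isDiag_of_mem_edgeSet (hM.1 e he))
  · intro e he f hf hef
    refine disjoint_left.mpr fun v hve hvf => hM.2 e he f hf hef ⟨v, ?_, ?_⟩
    exacts [Sym2.mem_toFinset.mp hve, Sym2.mem_toFinset.mp hvf]

theorem IsInducedMatching.card_filter_adj_matchedVerts [DecidableRel G.Adj]
    (hM : IsInducedMatching G M) {v : V} (hv : matchedVert M v) :
    #{w ∈ matchedVerts M | G.Adj v w} = 1 := by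
  obtain ⟨e, he, hve⟩ := hv
  obtain ⟨u, rfl⟩ := Sym2.mem_iff_exists.mp hve
  rw [card_eq_one]
  refine ⟨u, eq_singleton_iff_unique_mem.mpr ⟨?_, fun w hw => ?_⟩⟩
  · exact mem_filter.mpr ⟨mem_matchedVerts.mpr ⟨_, he, Sym2.mem_mk_right v u⟩, hM.1.1 _ he⟩
  · obtain ⟨hw, hvw⟩ := mem_filter.mp hw
    have hvwM : s(v, w) ∈ M := hM.2 _ hvw fun x hx => by
      rcases Sym2.mem_iff.mp hx with rfl | rfl
      exacts [⟨_, he, Sym2.mem_mk_left x u⟩, mem_matchedVerts.mp hw]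
    by_contra hwu
    refine hM.1.2 _ hvwM _ he (fun h => hwu (Sym2.congr_right.mp h)) ⟨v, ?_, ?_⟩ <;>
      exact Sym2.mem_mk_left _ _

theorem IsDIM.sum_degree_eq [Fintype V] [DecidableRel G.Adj] (hM : IsDIM G M) :
    ∑ v, G.degree v = 2 * #M + 2 * ∑ v ∈ (matchedVerts M)ᶜ, G.degree v := by
  rw [G.sum_degree_eq_of_compl_independent (matchedVerts M) fun v hv w hw =>
      hM.not_adj_of_not_matchedVert (mt mem_matchedVerts.mpr hv) (mt mem_matchedVerts.mpr hw),
    sum_congr rfl fun v hv =>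
      hM.isInducedMatching.card_filter_adj_matchedVerts (mem_matchedVerts.mp hv),
    sum_const, smul_eq_mul, mul_one, hM.1.card_matchedVerts]

theorem IsDIM.two_mul_card_add_le_sum_degree [Fintype V] [DecidableRel G.Adj]
    (hM : IsDIM G M) :
    2 * (#M : ℝ) + 2 * ((Fintype.card V - 2 * #M) * G.minDegree) ≤
      ∑ v, (G.degree v : ℝ) := by
  have hcard : #(matchedVerts M)ᶜ + 2 * #M = Fintype.card V := by
    rw [← hM.1.card_matchedVerts, card_compl_add_card]
  have hmin : #(matchedVerts M)ᶜ * G.minDegree ≤ ∑ v ∈ (matchedVerts M)ᶜ, G.degree v :=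
    card_nsmul_le_sum _ _ _ fun v _ => G.minDegree_le_degree v
  have hsum : 2 * #M + 2 * (#(matchedVerts M)ᶜ * G.minDegree) ≤ ∑ v, G.degree v := by
    rw [hM.sum_degree_eq]
    omega
  have hcompl : (Fintype.card V : ℝ) - 2 * #M = #(matchedVerts M)ᶜ := by
    rw [← hcard]
    push_cast
    ring
  rw [hcompl]
  exact_mod_cast hsum

end DominatingInducedMatching

theorem stmt_12_general (n : ℕ) (G : SimpleGraph (Fin n)) [DecidableRel G.Adj]
    (hδ : 1 ≤ G.minDegree)
    (ρ : ℝ)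
    (hρ₂ : ∀ μ ∈ spectrum ℝ (G.adjMatrix ℝ), μ ≤ ρ)
    (M : Finset (Sym2 (Fin n))) (hM : IsDIM G M) :
    (n : ℝ) * (2 * (G.minDegree : ℝ) - ρ) / (2 * (2 * (G.minDegree : ℝ) - 1))
      ≤ (M.card : ℝ) := by
  have hspec := G.sum_degree_le_card_mul hρ₂
  have hcomb := hM.two_mul_card_add_le_sum_degree
  have hδ' : (1 : ℝ) ≤ G.minDegree := by exact_mod_cast hδ
  rw [Fintype.card_fin] at hspec hcomb
  rw [div_le_iff₀ (by linarith)]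
  linarith

/-- If `G` has order `n`, minimum degree `δ ≥ 1`, adjacency spectral radius `ρ`, and a
dominating induced matching `M`, then `|M| ≥ n(2δ−ρ)/(2(2δ−1))`. -/
theorem stmt_12 (n : ℕ) (hn : 0 < n) (G : SimpleGraph (Fin n)) [DecidableRel G.Adj]
    (hδ : 1 ≤ G.minDegree)
    (ρ : ℝ) (hρ₁ : ρ ∈ spectrum ℝ (G.adjMatrix ℝ))
    (hρ₂ : ∀ μ ∈ spectrum ℝ (G.adjMatrix ℝ), μ ≤ ρ)
    (M : Finset (Sym2 (Fin n))) (hM : IsDIM G M) :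
    (n : ℝ) * (2 * (G.minDegree : ℝ) - ρ) / (2 * (2 * (G.minDegree : ℝ) - 1))
      ≤ (M.card : ℝ) :=
  stmt_12_general n G hδ ρ hρ₂ M hM
end

section
/- Let G be a graph with adjacency spectrum σ, let Λ⁻ = {λ ∈ σ : λ ≤ −1} and Λ⁺ = {λ ∈ σ : λ ≥ 1} (counted with multiplicity). If M is an induced matching of G, then |M| ≤ min{|Λ⁻|, |Λ⁺|}. -/
/-!
For an induced matching with edges `uᵢvᵢ` and a sign `s = ±1`, the vectors `e_{uᵢ} + s e_{vᵢ}`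
are pairwise orthogonal and, because no edge of `G` joins two different matching edges,
the quadratic form of `sA` agrees with the squared norm on their span. By the min-max principle,
a `k`-dimensional subspace on which `⟪x, sAx⟫ ≥ ‖x‖²` meets the span of the eigenvectors of `sA`
with eigenvalue `< 1` only in `0`, so `sA` has at least `k` eigenvalues `≥ 1`.
-/

open Matrix Finset
open scoped Classical

section EigenvalueCount

variable {𝕜 E ι : Type*} [RCLike 𝕜] [NormedAddCommGroup E] [InnerProductSpace 𝕜 E] [Fintype ι]
  (b : OrthonormalBasis ι 𝕜 E) {T : E →ₗ[𝕜] E} {μ : ι → ℝ}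

theorem OrthonormalBasis.re_inner_map_self_eq_sum (hb : ∀ i, T (b i) = (μ i : 𝕜) • b i) (x : E) :
    RCLike.re (inner 𝕜 x (T x)) = ∑ i, μ i * ‖inner 𝕜 (b i) x‖ ^ 2 := by
  have hTx : T x = ∑ i, (inner 𝕜 (b i) x * μ i) • b i := by
    conv_lhs => rw [← b.sum_repr' x]
    simp only [map_sum, map_smul, hb, smul_smul]
  rw [hTx, inner_sum, map_sum]
  refine Finset.sum_congr rfl fun i _ => ?_
  rw [inner_smul_right, ← inner_conj_symm x, mul_comm, ← mul_assoc, RCLike.conj_mul]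
  norm_cast
  ring

theorem OrthonormalBasis.finrank_le_card_eigenvalues_ge_of_le_re_inner
    (hb : ∀ i, T (b i) = (μ i : 𝕜) • b i) {c : ℝ} (W : Submodule 𝕜 E)
    (hW : ∀ x ∈ W, c * ‖x‖ ^ 2 ≤ RCLike.re (inner 𝕜 x (T x))) :
    Module.finrank 𝕜 W ≤ #{i | c ≤ μ i} := by
  set P : Finset ι := {i | c ≤ μ i}
  let L : W →ₗ[𝕜] (P → 𝕜) := LinearMap.pi fun i => innerₛₗ 𝕜 (b i) ∘ₗ W.subtype
  -- On `ker L` only eigenvalues `< c` contribute to `⟪x, T x⟫`, which `hW` forbids unless `x = 0`.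
  have hL : Function.Injective L := by
    refine (injective_iff_map_eq_zero L).2 fun ⟨x, hx⟩ hLx => ?_
    have hP : ∀ i ∈ P, inner 𝕜 (b i) x = 0 := fun i hi => congr_fun hLx ⟨i, hi⟩
    have hterm : ∀ i, 0 ≤ (c - μ i) * ‖inner 𝕜 (b i) x‖ ^ 2 := fun i => by
      by_cases hi : i ∈ P
      · simp [hP i hi]
      · have : μ i < c := by simpa [P] using hi
        positivity
    have hsum : ∑ i, (c - μ i) * ‖inner 𝕜 (b i) x‖ ^ 2 = 0 := by
      refine le_antisymm ?_ (Finset.sum_nonneg fun i _ => hterm i)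
      have := hW x hx
      rw [b.re_inner_map_self_eq_sum hb, ← b.sum_sq_norm_inner_right, Finset.mul_sum] at this
      simpa [sub_mul] using this
    have hzero : ∀ i, inner 𝕜 (b i) x = 0 := fun i => by
      by_cases hi : i ∈ P
      · exact hP i hi
      · have hlt : μ i < c := by simpa [P] using hi
        have := (Finset.sum_eq_zero_iff_of_nonneg fun i _ => hterm i).1 hsum i (mem_univ i)
        simpa [(sub_pos.2 hlt).ne'] using this
    ext1
    simpa [hzero] using (b.sum_repr' x).symm
  simpa using LinearMap.finrank_le_finrank_of_injective hL

theorem OrthonormalBasis.card_le_card_eigenvalues_ge_of_inner_map_eq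
    (hb : ∀ i, T (b i) = (μ i : 𝕜) • b i) {κ : Type*} [Fintype κ] {w : κ → E} (hw : ∀ j, w j ≠ 0)
    (horth : Pairwise fun j k => inner 𝕜 (w j) (w k) = 0) {c : ℝ}
    (hwT : ∀ j k, inner 𝕜 (w j) (T (w k)) = c * inner 𝕜 (w j) (w k)) :
    Fintype.card κ ≤ #{i | c ≤ μ i} := by
  have hspan : ∀ x ∈ Submodule.span 𝕜 (Set.range w), inner 𝕜 x (T x) = c * inner 𝕜 x x := by
    intro x hx
    obtain ⟨a, rfl⟩ := (Submodule.mem_span_range_iff_exists_fun 𝕜).1 hx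
    simp only [map_sum, map_smul, sum_inner, inner_sum, inner_smul_left, inner_smul_right, hwT,
      Finset.mul_sum]
    exact Finset.sum_congr rfl fun j _ => Finset.sum_congr rfl fun k _ => by ring
  rw [← finrank_span_eq_card (linearIndependent_of_ne_zero_of_inner_eq_zero hw horth)]
  refine b.finrank_le_card_eigenvalues_ge_of_le_re_inner hb _ fun x hx => ?_
  rw [hspan x hx, inner_self_eq_norm_sq_to_K]
  norm_cast

end EigenvalueCount

theorem Matrix.inner_single_toLpLin_single {V : Type*} [Fintype V] [DecidableEq V]
    (A : Matrix V V ℝ) (a c : V) :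
    inner ℝ (EuclideanSpace.single a (1 : ℝ)) (toLpLin 2 2 A (EuclideanSpace.single c 1))
      = A a c := by
  simp [EuclideanSpace.inner_single_left, toLpLin_apply]

theorem Matrix.IsHermitian.card_filter_roots_charpoly {𝕜 V : Type*} [RCLike 𝕜] [Fintype V]
    [DecidableEq V] {A : Matrix V V 𝕜} (hA : A.IsHermitian) (p : 𝕜 → Prop) [DecidablePred p] :
    Multiset.card (A.charpoly.roots.filter p) = #{i | p (hA.eigenvalues i)} := by
  rw [hA.roots_charpoly_eq_eigenvalues, Multiset.filter_map, Multiset.card_map]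
  rfl

namespace SimpleGraph

variable {V : Type*} [Fintype V] [DecidableEq V] (G : SimpleGraph V) [DecidableRel G.Adj]

theorem card_le_card_one_le_mul_eigenvalues {ι : Type*} [Fintype ι] {u v : ι → V}
    (hadj : ∀ i, G.Adj (u i) (v i))
    (hsep : ∀ i j, i ≠ j → ∀ x ∈ s(u i, v i), ∀ y ∈ s(u j, v j), x ≠ y ∧ ¬ G.Adj x y)
    {s : ℝ} (hs : s * s = 1) :
    Fintype.card ι ≤ #{x | 1 ≤ s * (G.isHermitian_adjMatrix ℝ).eigenvalues x} := by
  set hA := G.isHermitian_adjMatrix ℝ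
  let w : ι → EuclideanSpace ℝ V := fun i =>
    EuclideanSpace.single (u i) 1 + s • EuclideanSpace.single (v i) 1
  have hsingle : ∀ a c : V, inner ℝ (EuclideanSpace.single a (1 : ℝ)) (EuclideanSpace.single c 1)
      = if a = c then 1 else 0 := fun a c => by simp [EuclideanSpace.inner_single_left]
  have hb : ∀ x, (s • Matrix.toLpLin 2 2 (G.adjMatrix ℝ)) (hA.eigenvectorBasis x)
      = (s * hA.eigenvalues x) • hA.eigenvectorBasis x := fun x => by
    ext1
    simp [Matrix.toLpLin_apply, hA.mulVec_eigenvectorBasis, smul_smul]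
  have hww : ∀ i j, inner ℝ (w i) (w j) = if i = j then 2 else 0 := by
    intro i j
    simp only [w, inner_add_left, inner_add_right, inner_smul_left, inner_smul_right, hsingle]
    by_cases hij : i = j
    · subst hij
      simp [(hadj i).ne, (hadj i).ne.symm]
      linarith
    · obtain ⟨⟨⟨huu, -⟩, huv, -⟩, ⟨hvu, -⟩, hvv, -⟩ := by
        simpa only [Sym2.mem_iff, forall_eq_or_imp, forall_eq] using hsep i j hij
      simp [huu, huv, hvu, hvv, hij]
  have hwT : ∀ i j, inner ℝ (w i) ((s • Matrix.toLpLin 2 2 (G.adjMatrix ℝ)) (w j))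
      = 1 * inner ℝ (w i) (w j) := by
    intro i j
    rw [hww]
    simp only [w, map_add, map_smul, LinearMap.smul_apply, inner_add_left, inner_add_right,
      inner_smul_left, inner_smul_right, Matrix.inner_single_toLpLin_single, adjMatrix_apply]
    by_cases hij : i = j
    · subst hij
      simp [hadj i, (hadj i).symm]
      linarith
    · obtain ⟨⟨⟨-, auu⟩, -, auv⟩, ⟨-, avu⟩, -, avv⟩ := by
        simpa only [Sym2.mem_iff, forall_eq_or_imp, forall_eq] using hsep i j hij
      simp [auu, auv, avu, avv, hij]
  refine hA.eigenvectorBasis.card_le_card_eigenvalues_ge_of_inner_map_eq hb (w := w)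
    (fun i h => ?_) (fun i j hij => by simp [hww, hij]) hwT
  simpa [h] using hww i i

end SimpleGraph

theorem IsMatchingSet.ne_of_mem {V : Type*} {G : SimpleGraph V} {M : Finset (Sym2 V)}
    (hM : IsMatchingSet G M) {e f : Sym2 V} (he : e ∈ M) (hf : f ∈ M) (hef : e ≠ f) {x y : V}
    (hx : x ∈ e) (hy : y ∈ f) : x ≠ y := by
  rintro rfl
  exact hM.2 e he f hf hef ⟨x, hx, hy⟩

theorem IsInducedMatching.not_adj_of_mem {V : Type*} {G : SimpleGraph V} {M : Finset (Sym2 V)}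
    (hM : IsInducedMatching G M) {e f : Sym2 V} (he : e ∈ M) (hf : f ∈ M) (hef : e ≠ f) {x y : V}
    (hx : x ∈ e) (hy : y ∈ f) : ¬ G.Adj x y := by
  intro hxy
  have hxyM : s(x, y) ∈ M := hM.2 _ hxy fun z hz => by
    rcases Sym2.mem_iff.1 hz with rfl | rfl
    exacts [⟨e, he, hx⟩, ⟨f, hf, hy⟩]
  have h1 : s(x, y) = e := by
    by_contra h
    exact hM.1.2 _ hxyM _ he h ⟨x, Sym2.mem_mk_left x y, hx⟩
  have h2 : s(x, y) = f := by
    by_contra h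
    exact hM.1.2 _ hxyM _ hf h ⟨y, Sym2.mem_mk_right x y, hy⟩
  exact hef (h1.symm.trans h2)

/-- If `M` is an induced matching of `G`, then `|M| ≤ min{|Λ⁻|, |Λ⁺|}`, where `Λ⁻`
(resp. `Λ⁺`) is the multiset of adjacency eigenvalues `≤ −1` (resp. `≥ 1`). -/
theorem stmt_15 (n : ℕ) (G : SimpleGraph (Fin n)) [DecidableRel G.Adj]
    (M : Finset (Sym2 (Fin n))) (hM : IsInducedMatching G M) :
    M.card ≤
      min (Multiset.card (((G.adjMatrix ℝ).charpoly.roots).filter (fun x => x ≤ -1)))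
          (Multiset.card (((G.adjMatrix ℝ).charpoly.roots).filter (fun x => 1 ≤ x))) := by
  let u : M → Fin n := fun e => (Quot.out e.1).1
  let v : M → Fin n := fun e => (Quot.out e.1).2
  have huv : ∀ e : M, s(u e, v e) = e := fun e => Quot.out_eq e.1
  have hadj : ∀ e, G.Adj (u e) (v e) := fun e => by
    simpa [← SimpleGraph.mem_edgeSet, huv] using hM.1.1 e e.2
  have hsep : ∀ e f : M, e ≠ f → ∀ x ∈ s(u e, v e), ∀ y ∈ s(u f, v f), x ≠ y ∧ ¬ G.Adj x y := by
    intro e f hef x hx y hy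
    rw [huv] at hx hy
    have hef' : e.1 ≠ f.1 := fun h => hef (Subtype.ext h)
    exact ⟨hM.1.ne_of_mem e.2 f.2 hef' hx hy, hM.not_adj_of_mem e.2 f.2 hef' hx hy⟩
  have hneg := G.card_le_card_one_le_mul_eigenvalues hadj hsep (s := -1) (by norm_num)
  have hpos := G.card_le_card_one_le_mul_eigenvalues hadj hsep (s := 1) (by norm_num)
  rw [Fintype.card_coe] at hneg hpos
  simp only [(G.isHermitian_adjMatrix ℝ).card_filter_roots_charpoly, le_min_iff]
  exact ⟨by simpa [le_neg] using hneg, by simpa using hpos⟩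
end

section
/- Let G be a graph of order n with minimum degree δ ≥ 1, a dominating induced matching M of size m, and let q₁ be the largest signless Laplacian eigenvalue of G. Then m ≥ (tr(Q(G)) − n(q₁ − 2δ))/(2(2δ − 1)) (for δ ≥ 1), where tr(Q(G)) = Σ_v d(v). -/
open Matrix Finset
open scoped Classical

/-! Rayleigh's principle for the all-ones vector gives `n q₁ ≥ 𝟙ᵀ Q 𝟙 = 2 Σ d(v) = 4|E|`, while
`tr Q = Σ d(v) = 2|E|`. On the combinatorial side, every edge of `G` meets `V(M)`, so the vertices
outside `V(M)` are pairwise non-adjacent: their incident edges are pairwise distinct and none of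
them lies in `M`. Hence `|E| ≥ m + Σ_{v ∉ V(M)} d(v) ≥ m + (n - 2m) δ`, and the two estimates
combine to the bound. -/

open scoped MatrixOrder in
theorem Matrix.IsHermitian.dotProduct_mulVec_le_of_spectrum_le {ι : Type*} [Fintype ι]
    [DecidableEq ι] {A : Matrix ι ι ℝ} (hA : A.IsHermitian) {c : ℝ}
    (hc : ∀ μ ∈ spectrum ℝ A, μ ≤ c) (x : ι → ℝ) : x ⬝ᵥ (A *ᵥ x) ≤ c * (x ⬝ᵥ x) := by
  have hle : A ≤ algebraMap ℝ _ c := le_algebraMap_of_spectrum_le hc hA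
  have := (Matrix.le_iff.mp hle).dotProduct_mulVec_nonneg x
  rw [star_trivial, sub_mulVec, dotProduct_sub, Algebra.algebraMap_eq_smul_one, smul_mulVec,
    one_mulVec, dotProduct_smul, smul_eq_mul] at this
  linarith

namespace SimpleGraph

variable {V : Type*} [Fintype V] [DecidableEq V] (G : SimpleGraph V) [DecidableRel G.Adj]
  (R : Type*)

def signlessLapMatrix [AddMonoidWithOne R] : Matrix V V R := G.degMatrix R + G.adjMatrix R

theorem isHermitian_signlessLapMatrix [NonAssocSemiring R] [StarRing R] :
    (G.signlessLapMatrix R).IsHermitian :=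
  (G.isHermitian_degMatrix R).add (G.isHermitian_adjMatrix R)

theorem trace_signlessLapMatrix [NonAssocSemiring R] :
    (G.signlessLapMatrix R).trace = ∑ v, (G.degree v : R) := by
  rw [signlessLapMatrix, trace_add, trace_adjMatrix, add_zero, degMatrix, trace_diagonal]

theorem one_dotProduct_signlessLapMatrix_mulVec_one [NonAssocSemiring R] :
    1 ⬝ᵥ (G.signlessLapMatrix R *ᵥ 1) = 2 * ∑ v, (G.degree v : R) := by
  have hdeg : ∀ v, (G.signlessLapMatrix R *ᵥ 1) v = 2 * G.degree v := fun v => by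
    rw [signlessLapMatrix, add_mulVec, Pi.add_apply, degMatrix_mulVec_apply,
      adjMatrix_mulVec_apply]
    simp [two_mul]
  simp only [one_dotProduct, hdeg, mul_sum]

end SimpleGraph

section DominatingInducedMatching

open SimpleGraph

variable {V : Type*} {G : SimpleGraph V} {M : Finset (Sym2 V)}

theorem IsDIM.exists_matchedVert_of_mem_edgeSet (hM : IsDIM G M) {e : Sym2 V}
    (he : e ∈ G.edgeSet) : ∃ v ∈ e, matchedVert M v := by
  by_cases heM : e ∈ M
  · exact ⟨_, e.out_fst_mem, e, heM, e.out_fst_mem⟩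
  · obtain ⟨f, ⟨hf, v, hve, hvf⟩, -⟩ := hM.2 e he heM
    exact ⟨v, hve, f, hf, hvf⟩

variable [Fintype V] [DecidableEq V]

theorem card_filter_matchedVert_le (M : Finset (Sym2 V)) :
    #{v | matchedVert M v} ≤ 2 * #M := by
  have hsub : ({v | matchedVert M v} : Finset V) ⊆ M.biUnion Sym2.toFinset := by
    intro v hv
    obtain ⟨e, he, hve⟩ := (mem_filter.mp hv).2
    exact mem_biUnion.mpr ⟨e, he, Sym2.mem_toFinset.mpr hve⟩
  calc #{v | matchedVert M v} ≤ ∑ e ∈ M, #e.toFinset := (card_le_card hsub).trans card_biUnion_le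
    _ ≤ ∑ _e ∈ M, 2 := sum_le_sum fun e _ => by rw [Sym2.card_toFinset]; split_ifs <;> omega
    _ = 2 * #M := by rw [sum_const, smul_eq_mul, mul_comm]

variable [DecidableRel G.Adj]

theorem IsDIM.sum_degree_unmatched_add_card_le (hM : IsDIM G M) :
    ∑ v with ¬ matchedVert M v, G.degree v + #M ≤ #G.edgeFinset := by
  set S : Finset V := {v | ¬ matchedVert M v}
  have hdisj : (S : Set V).PairwiseDisjoint (G.incidenceFinset ·) := by
    intro v hv w hw hvw
    refine disjoint_left.mpr fun e hev hew => ?_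
    rw [mem_incidenceFinset] at hev hew
    obtain ⟨u, hue, hu⟩ := hM.exists_matchedVert_of_mem_edgeSet hev.1
    rw [(Sym2.mem_and_mem_iff hvw).mp ⟨hev.2, hew.2⟩, Sym2.mem_iff] at hue
    rcases hue with rfl | rfl
    · exact (mem_filter.mp hv).2 hu
    · exact (mem_filter.mp hw).2 hu
  have hsub : S.biUnion (G.incidenceFinset ·) ⊆ G.edgeFinset \ M := by
    intro e he
    obtain ⟨v, hv, hev⟩ := mem_biUnion.mp he
    rw [mem_incidenceFinset] at hev
    exact mem_sdiff.mpr ⟨mem_edgeFinset.mpr hev.1, fun heM => (mem_filter.mp hv).2 ⟨e, heM, hev.2⟩⟩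
  have hMsub : M ⊆ G.edgeFinset := fun e he => mem_edgeFinset.mpr (hM.1.1 e he)
  have hcard := (card_le_card hsub).trans_eq (card_sdiff_of_subset hMsub)
  rw [card_biUnion hdisj] at hcard
  simp only [card_incidenceFinset_eq_degree] at hcard
  have := card_le_card hMsub
  omega

theorem IsDIM.card_add_card_mul_minDegree_le (hM : IsDIM G M) :
    #M + Fintype.card V * G.minDegree ≤ #G.edgeFinset + 2 * #M * G.minDegree := by
  have hsplit := card_filter_add_card_filter_not (s := univ) (matchedVert M)
  have hmatched := card_filter_matchedVert_le M
  have hunmatched : #{v | ¬ matchedVert M v} * G.minDegree ≤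
      ∑ v with ¬ matchedVert M v, G.degree v :=
    card_nsmul_le_sum _ _ _ fun v _ => G.minDegree_le_degree v
  rw [card_univ] at hsplit
  calc #M + Fintype.card V * G.minDegree
        = #M + #{v | matchedVert M v} * G.minDegree
            + #{v | ¬ matchedVert M v} * G.minDegree := by rw [← hsplit]; ring
    _ ≤ #M + 2 * #M * G.minDegree + ∑ v with ¬ matchedVert M v, G.degree v := by
        gcongr
    _ ≤ #G.edgeFinset + 2 * #M * G.minDegree := by
        linarith [hM.sum_degree_unmatched_add_card_le]

end DominatingInducedMatching

theorem stmt_18_general (n m : ℕ) (G : SimpleGraph (Fin n)) [DecidableRel G.Adj]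
    (hδ : 1 ≤ G.minDegree)
    (M : Finset (Sym2 (Fin n))) (hM : IsDIM G M) (hcard : M.card = m)
    (q₁ : ℝ)
    (hq₂ : ∀ μ ∈ spectrum ℝ (G.degMatrix ℝ + G.adjMatrix ℝ), μ ≤ q₁) :
    ((G.degMatrix ℝ + G.adjMatrix ℝ).trace - (n : ℝ) * (q₁ - 2 * (G.minDegree : ℝ)))
        / (2 * (2 * (G.minDegree : ℝ) - 1)) ≤ (m : ℝ) := by
  subst hcard
  have hrayleigh := (G.isHermitian_signlessLapMatrix ℝ).dotProduct_mulVec_le_of_spectrum_le hq₂ 1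
  rw [G.one_dotProduct_signlessLapMatrix_mulVec_one, one_dotProduct_one,
    Fintype.card_fin] at hrayleigh
  have hdegrees : ∑ v, (G.degree v : ℝ) = 2 * #G.edgeFinset := by
    exact_mod_cast G.sum_degrees_eq_twice_card_edges
  have hcount : (#M + n * G.minDegree : ℝ) ≤ #G.edgeFinset + 2 * #M * G.minDegree := by
    exact_mod_cast Fintype.card_fin n ▸ hM.card_add_card_mul_minDegree_le
  have hδ' : (1 : ℝ) ≤ G.minDegree := by exact_mod_cast hδ
  have htrace : (G.degMatrix ℝ + G.adjMatrix ℝ).trace = ∑ v, (G.degree v : ℝ) :=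
    G.trace_signlessLapMatrix ℝ
  rw [div_le_iff₀ (by linarith)]
  linarith

/-- If `G` has order `n`, minimum degree `δ ≥ 1`, a DIM of size `m`, and largest signless
Laplacian eigenvalue `q₁`, then `m ≥ (tr(Q(G)) − n(q₁ − 2δ))/(2(2δ−1))`. -/
theorem stmt_18 (n m : ℕ) (G : SimpleGraph (Fin n)) [DecidableRel G.Adj]
    (hδ : 1 ≤ G.minDegree)
    (M : Finset (Sym2 (Fin n))) (hM : IsDIM G M) (hcard : M.card = m)
    (q₁ : ℝ) (hq₁ : q₁ ∈ spectrum ℝ (G.degMatrix ℝ + G.adjMatrix ℝ))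
    (hq₂ : ∀ μ ∈ spectrum ℝ (G.degMatrix ℝ + G.adjMatrix ℝ), μ ≤ q₁) :
    ((G.degMatrix ℝ + G.adjMatrix ℝ).trace - (n : ℝ) * (q₁ - 2 * (G.minDegree : ℝ)))
        / (2 * (2 * (G.minDegree : ℝ) - 1)) ≤ (m : ℝ) :=
  stmt_18_general n m G hδ M hM hcard q₁ hq₂
end
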